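/- Let G be a P_6^2-free graph containing five distinct vertices u_1, u_2, u_3, u_4, u_5 such that every pair among them is adjacent except possibly the pair {u_4, u_5}. Suppose w is a vertex outside {u_1, u_2, u_3, u_4, u_5} such that w, u_1, u_3 are pairwise adjacent. Then there is no vertex v outside {u_1, u_2, u_3, u_4, u_5, w} such that v, u_3, w are pairwise adjacent. -/

import Mathlib

open SimpleGraph

/-- A graph is `P6SqFree` if it has no subgraph isomorphic to the square of the
path on six vertices (vertices `v_1, …, v_6`, edges `v_i v_j` whenever `j - i ≤ 2`). -/
def P6SqFree {V : Type*} (G : SimpleGraph V) : Prop :=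
  ¬ ∃ f : Fin 6 → V, Function.Injective f ∧
      ∀ i j : Fin 6, (i : ℕ) < (j : ℕ) → (j : ℕ) ≤ (i : ℕ) + 2 → G.Adj (f i) (f j)

/-- The number of triangles of a finite graph. -/
noncomputable def triCount {V : Type*} [Fintype V] [DecidableEq V] (G : SimpleGraph V) : ℕ :=
  have : DecidableRel G.Adj := Classical.decRel _
  (G.cliqueFinset 3).card

/-- The number of edges of a finite graph. -/
noncomputable def edgeCount {V : Type*} (G : SimpleGraph V) : ℕ :=
  G.edgeSet.ncard

/-- The function `g` from the paper. -/
def gfun (n : ℕ) : ℕ :=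
  if n % 6 = 2 ∨ n % 6 = 3 then n / 6 - 1
  else if n % 6 = 5 then n / 6 + 1
  else n / 6

/-- The graph `H_n^i`: complete bipartite graph between `{0,…,i-1}` and the rest,
together with `i/3` pairwise vertex-disjoint triangles inside the first part
(grouping the first part into consecutive triples). -/
def Hgraph (n i : ℕ) : SimpleGraph (Fin n) where
  Adj v w := v ≠ w ∧
    ((v.val < i ∧ ¬ w.val < i) ∨ (¬ v.val < i ∧ w.val < i) ∨
     (v.val < i ∧ w.val < i ∧ v.val / 3 = w.val / 3))
  symm := by
    constructor
    rintro v w ⟨hne, h⟩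
    refine ⟨hne.symm, ?_⟩
    rcases h with h | h | h
    · exact Or.inr (Or.inl ⟨h.2, h.1⟩)
    · exact Or.inl ⟨h.2, h.1⟩
    · exact Or.inr (Or.inr ⟨h.2.1, h.1, h.2.2.symm⟩)
  loopless := by constructor; intro v h; exact h.1 rfl

theorem P6SqFree.false_of_squarePath {V : Type*} {G : SimpleGraph V} (hfree : P6SqFree G)
    {a b c d e f : V} (hnodup : [a, b, c, d, e, f].Nodup)
    (hab : G.Adj a b) (hac : G.Adj a c) (hbc : G.Adj b c) (hbd : G.Adj b d)
    (hcd : G.Adj c d) (hce : G.Adj c e) (hde : G.Adj d e) (hdf : G.Adj d f)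
    (hef : G.Adj e f) : False := by
  refine hfree ⟨![a, b, c, d, e, f],
    List.nodup_ofFn.mp (by simpa [List.ofFn_succ] using hnodup), ?_⟩
  intro i j hij hji
  fin_cases i <;> fin_cases j <;> first | assumption | simp at hij hji

theorem stmt13_general {V : Type*} (G : SimpleGraph V) (hfree : P6SqFree G)
    (u₁ u₂ u₃ u₄ u₅ : V) (hdist : List.Pairwise (· ≠ ·) [u₁, u₂, u₃, u₄, u₅])
    (h12 : G.Adj u₁ u₂) (h13 : G.Adj u₁ u₃) (h14 : G.Adj u₁ u₄)
    (h23 : G.Adj u₂ u₃) (h24 : G.Adj u₂ u₄)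
    (w : V) (hw : w ∉ ({u₁, u₂, u₃, u₄, u₅} : Set V))
    (hw1 : G.Adj w u₁) (hw3 : G.Adj w u₃) :
    ¬ ∃ v : V, v ∉ ({u₁, u₂, u₃, u₄, u₅, w} : Set V) ∧ G.Adj v u₃ ∧ G.Adj v w := by
  rintro ⟨v, hv, hv3, hvw⟩
  have hnodup : [v, w, u₃, u₁, u₂, u₄].Nodup := by
    simp only [Set.mem_insert_iff, Set.mem_singleton_iff, not_or] at hv hw
    simp only [List.pairwise_cons, List.mem_cons, List.not_mem_nil, or_false] at hdist
    simp only [List.nodup_cons, List.mem_cons, List.not_mem_nil, or_false, not_or]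
    grind
  exact hfree.false_of_squarePath hnodup hvw hv3 hw3 hw1 h13.symm h23.symm h12 h14 h24

/-- In a `P_6^2`-free graph containing a copy of `K_5` minus the edge `u₄u₅`, if an
outside vertex `w` forms a triangle with `u₁` and `u₃`, then no further vertex forms a
triangle with `u₃` and `w`. -/
theorem stmt13 {V : Type*} (G : SimpleGraph V) (hfree : P6SqFree G)
    (u₁ u₂ u₃ u₄ u₅ : V) (hdist : List.Pairwise (· ≠ ·) [u₁, u₂, u₃, u₄, u₅])
    (h12 : G.Adj u₁ u₂) (h13 : G.Adj u₁ u₃) (h14 : G.Adj u₁ u₄) (h15 : G.Adj u₁ u₅)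
    (h23 : G.Adj u₂ u₃) (h24 : G.Adj u₂ u₄) (h25 : G.Adj u₂ u₅)
    (h34 : G.Adj u₃ u₄) (h35 : G.Adj u₃ u₅)
    (w : V) (hw : w ∉ ({u₁, u₂, u₃, u₄, u₅} : Set V))
    (hw1 : G.Adj w u₁) (hw3 : G.Adj w u₃) :
    ¬ ∃ v : V, v ∉ ({u₁, u₂, u₃, u₄, u₅, w} : Set V) ∧ G.Adj v u₃ ∧ G.Adj v w :=
  stmt13_general G hfree u₁ u₂ u₃ u₄ u₅ hdist h12 h13 h14 h23 h24 w hw hw1 hw3
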